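/- For every graph G with edge set E_G and degrees d_v, and every p ∈ [1/2, 1], the 2-level approximated randomization overlap L_{F^{(≤2)}}(ρ^p_G) = p^{|E_G|} + (1/4)(1-p)p^{|E_G|-1}|E_G| + (1/16)(1-p)²p^{|E_G|-2}[C(|E_G|,2) + 3 Σ_{v∈V} C(d_v,2)] is a lower bound on the full randomization overlap L(ρ^p_G) = Tr[|G⟩⟨G| ρ^p_G]. -/

import Mathlib

open scoped BigOperators

/-- The graph state amplitude function for edge set `E` on `n` qubits:
`|G⟩ = ∏ CZ |+⟩^⊗n`, whose amplitude on a computational basis state `x` is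
`2^(-n/2)` times `(-1)` for every edge both of whose endpoints are in state `1`. -/
noncomputable def gs (n : ℕ) (E : Finset (Sym2 (Fin n))) : (Fin n → Fin 2) → ℂ :=
  fun x => ((Real.sqrt 2)⁻¹ : ℝ) ^ n *
    ∏ e ∈ E, (if ∀ i ∈ e, x i = 1 then (-1 : ℂ) else 1)

/-- Inner product `⟨v|w⟩` on the `n`-qubit state space. -/
noncomputable def ip {n : ℕ} (v w : (Fin n → Fin 2) → ℂ) : ℂ :=
  ∑ x, (starRingEnd ℂ) (v x) * w x

/-- The edge set of the complete graph on `n` labeled vertices. -/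
def completeEdges (n : ℕ) : Finset (Sym2 (Fin n)) :=
  Finset.univ.filter fun e => ¬ e.IsDiag

/-!
Index the spanning subgraphs `F` of `G` by their deleted edge sets `D = E_G \ E_F`. Since CZ
gates square to the identity, `⟨G|F⟩ = ⟨G^∅|D⟩`, the average over basis states `x` of
`∏_{e ∈ D} (1 - 2[e ⊆ x])`, and a set of `k` vertices is all-ones in `x` with probability `2^{-k}`.
Hence the overlap is `1/2` for one deleted edge, and `4 · 2^{-|e ∪ f|}` for two, i.e. `1/2` or
`1/4` according as `e` and `f` share a vertex or not; adjacent pairs of edges are counted by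
`∑_v C(d_v, 2)`. All terms are nonnegative, so dropping those with `|D| ≥ 3` gives the bound.
-/

open Finset

namespace Finset

theorem prod_mul_prod_eq_prod_symmDiff {ι M : Type*} [DecidableEq ι] [CommMonoid M]
    {f : ι → M} (hf : ∀ i, f i * f i = 1) (s t : Finset ι) :
    (∏ i ∈ s, f i) * ∏ i ∈ t, f i = ∏ i ∈ symmDiff s t, f i := by
  rw [← prod_sdiff (inter_subset_left : s ∩ t ⊆ s), ← prod_sdiff (inter_subset_right : s ∩ t ⊆ t),
    symmDiff_def, sup_eq_union, prod_union disjoint_sdiff_sdiff, sdiff_inter_self_left,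
    sdiff_inter_self_right]
  have h : (∏ i ∈ s ∩ t, f i) * ∏ i ∈ s ∩ t, f i = 1 := by
    rw [← prod_mul_distrib]; exact prod_eq_one fun i _ => hf i
  rw [mul_mul_mul_comm, h, mul_one]

theorem sum_powerset_sdiff {ι M : Type*} [DecidableEq ι] [AddCommMonoid M] (s : Finset ι)
    (f : Finset ι → M) : ∑ t ∈ s.powerset, f (s \ t) = ∑ t ∈ s.powerset, f t :=
  sum_nbij' (s \ ·) (s \ ·) (fun _ _ => mem_powerset.2 sdiff_subset)
    (fun _ _ => mem_powerset.2 sdiff_subset)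
    (fun _ ht => Finset.sdiff_sdiff_eq_self (mem_powerset.1 ht))
    (fun _ ht => Finset.sdiff_sdiff_eq_self (mem_powerset.1 ht)) fun _ _ => rfl

theorem sum_range_sum_powersetCard_le_sum_powerset {ι M : Type*} [AddCommMonoid M] [PartialOrder M]
    [IsOrderedAddMonoid M] (s : Finset ι) (r : ℕ) {f : Finset ι → M} (hf : ∀ t ⊆ s, 0 ≤ f t) :
    ∑ k ∈ range r, ∑ t ∈ s.powersetCard k, f t ≤ ∑ t ∈ s.powerset, f t := by
  classical
  rw [← sum_biUnion (s.pairwise_disjoint_powersetCard.set_pairwise _)]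
  refine sum_le_sum_of_subset_of_nonneg ?_ fun t ht _ => hf t (mem_powerset.1 ht)
  intro t ht
  obtain ⟨k, -, hk⟩ := mem_biUnion.1 ht
  exact mem_powerset.2 (mem_powersetCard.1 hk).1

theorem card_filter_forall_mem_eq {ι α : Type*} [Fintype ι] [DecidableEq ι] [Fintype α]
    [DecidableEq α] (S : Finset ι) (a : α) [DecidablePred fun x : ι → α => ∀ i ∈ S, x i = a] :
    #{x : ι → α | ∀ i ∈ S, x i = a} = Fintype.card α ^ (Fintype.card ι - #S) := by
  have h : ({x : ι → α | ∀ i ∈ S, x i = a} : Finset _)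
      = Fintype.piFinset fun i => if i ∈ S then {a} else univ := by
    ext x; simp only [mem_filter, mem_univ, true_and, Fintype.mem_piFinset]
    refine ⟨fun h i => ?_, fun h i hi => by simpa [hi] using h i⟩
    split_ifs with hi
    · simp [h i hi]
    · exact mem_univ _
  rw [h, Fintype.card_piFinset]
  simp [apply_ite card, prod_ite, filter_notMem_eq_sdiff, ← compl_eq_univ_sdiff, card_compl]

end Finset

theorem Sym2.card_toFinset_inter_le_one {α : Type*} [DecidableEq α] {e f : Sym2 α} (hef : e ≠ f) :
    #(e.toFinset ∩ f.toFinset) ≤ 1 := by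
  refine card_le_one.2 fun a ha b hb => by_contra fun hab => hef ?_
  simp only [mem_inter, Sym2.mem_toFinset] at ha hb
  exact ((Sym2.mem_and_mem_iff hab).1 ⟨ha.1, hb.1⟩).trans
    ((Sym2.mem_and_mem_iff hab).1 ⟨ha.2, hb.2⟩).symm

theorem SimpleGraph.sum_powersetCard_two_card_common_eq_sum_choose_degree {V : Type*} [Fintype V]
    [DecidableEq V] (G : SimpleGraph V) [DecidableRel G.Adj] :
    ∑ D ∈ G.edgeFinset.powersetCard 2, #{v | ∀ e ∈ D, v ∈ e} = ∑ v, (G.degree v).choose 2 := by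
  refine (sum_card_bipartiteAbove_eq_sum_card_bipartiteBelow _).trans (sum_congr rfl fun v _ => ?_)
  have h : (G.edgeFinset.powersetCard 2).bipartiteBelow (fun D v => ∀ e ∈ D, v ∈ e) v
      = (G.incidenceFinset v).powersetCard 2 := by
    ext D
    simp only [bipartiteBelow, mem_filter, mem_powersetCard, G.incidenceFinset_eq_filter,
      subset_iff]
    aesop
  rw [h, card_powersetCard, G.card_incidenceFinset_eq_degree]

section GraphState

variable {n : ℕ}

def edgeSign (x : Fin n → Fin 2) (e : Sym2 (Fin n)) : ℂ :=
  if ∀ i ∈ e, x i = 1 then -1 else 1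

theorem edgeSign_mul_self (x : Fin n → Fin 2) (e : Sym2 (Fin n)) :
    edgeSign x e * edgeSign x e = 1 := by
  unfold edgeSign; split_ifs <;> norm_num

theorem gs_apply (E : Finset (Sym2 (Fin n))) (x : Fin n → Fin 2) :
    gs n E x = ((Real.sqrt 2)⁻¹ : ℝ) ^ n * ∏ e ∈ E, edgeSign x e := rfl

theorem star_gs (E : Finset (Sym2 (Fin n))) (x : Fin n → Fin 2) :
    starRingEnd ℂ (gs n E x) = gs n E x := by
  simp [gs_apply, edgeSign, map_prod, apply_ite (starRingEnd ℂ)]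

theorem gs_mul_gs (E F : Finset (Sym2 (Fin n))) (x : Fin n → Fin 2) :
    gs n E x * gs n F x = gs n ∅ x * gs n (symmDiff E F) x := by
  simp only [gs_apply, ← prod_mul_prod_eq_prod_symmDiff (edgeSign_mul_self x), prod_empty]
  ring

theorem ip_gs_gs (E F : Finset (Sym2 (Fin n))) :
    ip (gs n E) (gs n F) = ip (gs n ∅) (gs n (symmDiff E F)) := by
  unfold ip
  refine sum_congr rfl fun x _ => ?_
  rw [star_gs, star_gs, gs_mul_gs]

theorem ip_gs_empty (D : Finset (Sym2 (Fin n))) :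
    ip (gs n ∅) (gs n D) = (2 ^ n)⁻¹ * ∑ x, ∏ e ∈ D, edgeSign x e := by
  have hsq : (((Real.sqrt 2)⁻¹ : ℝ) : ℂ) ^ n * (((Real.sqrt 2)⁻¹ : ℝ) : ℂ) ^ n = (2 ^ n)⁻¹ := by
    rw [← mul_pow, ← Complex.ofReal_mul, ← mul_inv, Real.mul_self_sqrt zero_le_two]
    push_cast; rw [inv_pow]
  unfold ip
  rw [mul_sum]
  refine sum_congr rfl fun x _ => ?_
  rw [star_gs, gs_apply, gs_apply, prod_empty, mul_one, ← mul_assoc, hsq]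

theorem inv_two_pow_mul_sum_ite_forall_eq_one (S : Finset (Fin n)) :
    (2 ^ n)⁻¹ * ∑ x : Fin n → Fin 2, (if ∀ i ∈ S, x i = 1 then 1 else 0 : ℂ) = (2 ^ #S)⁻¹ := by
  have hS : #S ≤ n := by simpa using card_le_univ S
  rw [sum_boole, card_filter_forall_mem_eq, Fintype.card_fin, Fintype.card_fin]
  push_cast
  rw [pow_sub₀ _ two_ne_zero hS, ← mul_assoc, inv_mul_cancel₀ (pow_ne_zero _ two_ne_zero), one_mul]

theorem inv_two_pow_mul_sum_one : (2 ^ n)⁻¹ * ∑ _x : Fin n → Fin 2, (1 : ℂ) = 1 := by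
  simp

theorem edgeSign_eq (x : Fin n → Fin 2) (e : Sym2 (Fin n)) :
    edgeSign x e = 1 - 2 * (if ∀ i ∈ e.toFinset, x i = 1 then 1 else 0) := by
  simp only [edgeSign, Sym2.mem_toFinset]; split_ifs <;> norm_num

theorem ip_gs_empty_singleton {e : Sym2 (Fin n)} (he : ¬ e.IsDiag) :
    ip (gs n ∅) (gs n {e}) = 1 / 2 := by
  simp only [ip_gs_empty, prod_singleton, edgeSign_eq, sum_sub_distrib, ← mul_sum, mul_sub,
    mul_left_comm _ (2 : ℂ), inv_two_pow_mul_sum_ite_forall_eq_one, inv_two_pow_mul_sum_one,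
    Sym2.card_toFinset_of_not_isDiag e he]
  norm_num

theorem ip_gs_empty_pair {e f : Sym2 (Fin n)} (he : ¬ e.IsDiag) (hf : ¬ f.IsDiag) (hef : e ≠ f) :
    ip (gs n ∅) (gs n {e, f}) = 4 / 2 ^ #(e.toFinset ∪ f.toFinset) := by
  have hsplit : ∀ x, edgeSign x e * edgeSign x f =
      1 - 2 * (if ∀ i ∈ e.toFinset, x i = 1 then 1 else 0)
        - 2 * (if ∀ i ∈ f.toFinset, x i = 1 then 1 else 0)
        + 4 * (if ∀ i ∈ e.toFinset ∪ f.toFinset, x i = 1 then 1 else 0) := by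
    intro x
    simp only [edgeSign_eq, forall_mem_union, ite_and]
    split_ifs <;> norm_num
  simp only [ip_gs_empty, prod_pair hef, hsplit, sum_add_distrib, sum_sub_distrib, ← mul_sum,
    mul_add, mul_sub, mul_left_comm _ (_ : ℂ) (∑ _x, _), inv_two_pow_mul_sum_ite_forall_eq_one,
    inv_two_pow_mul_sum_one, Sym2.card_toFinset_of_not_isDiag e he,
    Sym2.card_toFinset_of_not_isDiag f hf]
  rw [mul_left_comm, inv_two_pow_mul_sum_ite_forall_eq_one]
  ring

theorem norm_ip_gs_empty_pair_sq {e f : Sym2 (Fin n)} (he : ¬ e.IsDiag) (hf : ¬ f.IsDiag)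
    (hef : e ≠ f) :
    ‖ip (gs n ∅) (gs n {e, f})‖ ^ 2 = (1 + 3 * #(e.toFinset ∩ f.toFinset)) / 16 := by
  have hunion := card_union_add_card_inter e.toFinset f.toFinset
  rw [Sym2.card_toFinset_of_not_isDiag e he, Sym2.card_toFinset_of_not_isDiag f hf] at hunion
  have hinter := Sym2.card_toFinset_inter_le_one hef
  rw [ip_gs_empty_pair he hf hef]
  interval_cases h : #(e.toFinset ∩ f.toFinset)
  · rw [show #(e.toFinset ∪ f.toFinset) = 4 by omega]; norm_num
  · rw [show #(e.toFinset ∪ f.toFinset) = 3 by omega]; norm_num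

theorem sum_powerset_norm_ip_sq_eq (p : ℝ) (E : Finset (Sym2 (Fin n))) :
    ∑ F ∈ E.powerset, p ^ #F * (1 - p) ^ (#E - #F) * ‖ip (gs n E) (gs n F)‖ ^ 2
      = ∑ D ∈ E.powerset, p ^ (#E - #D) * (1 - p) ^ #D * ‖ip (gs n ∅) (gs n D)‖ ^ 2 := by
  rw [← sum_powerset_sdiff]
  refine sum_congr rfl fun D hD => ?_
  have hDE := mem_powerset.1 hD
  rw [card_sdiff_of_subset hDE, Nat.sub_sub_self (card_le_card hDE), ip_gs_gs,
    symmDiff_of_ge sdiff_le, Finset.sdiff_sdiff_eq_self hDE]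

theorem sum_powersetCard_zero_norm_ip_sq (p : ℝ) (E : Finset (Sym2 (Fin n))) :
    ∑ D ∈ E.powersetCard 0, p ^ (#E - #D) * (1 - p) ^ #D * ‖ip (gs n ∅) (gs n D)‖ ^ 2
      = p ^ #E := by
  simp [ip_gs_empty]

theorem sum_powersetCard_one_norm_ip_sq (p : ℝ) {E : Finset (Sym2 (Fin n))}
    (hE : ∀ e ∈ E, ¬ e.IsDiag) :
    ∑ D ∈ E.powersetCard 1, p ^ (#E - #D) * (1 - p) ^ #D * ‖ip (gs n ∅) (gs n D)‖ ^ 2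
      = 1 / 4 * (1 - p) * p ^ (#E - 1) * #E := by
  rw [powersetCard_one, sum_map]
  trans ∑ _e ∈ E, 1 / 4 * (1 - p) * p ^ (#E - 1)
  · refine sum_congr rfl fun e he => ?_
    simp only [Function.Embedding.coeFn_mk, card_singleton, ip_gs_empty_singleton (hE e he)]
    norm_num
    ring
  · rw [sum_const, nsmul_eq_mul, mul_comm]

theorem sum_powersetCard_two_norm_ip_sq (p : ℝ) {E : Finset (Sym2 (Fin n))}
    (hE : ∀ e ∈ E, ¬ e.IsDiag) :
    ∑ D ∈ E.powersetCard 2, p ^ (#E - #D) * (1 - p) ^ #D * ‖ip (gs n ∅) (gs n D)‖ ^ 2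
      = 1 / 16 * (1 - p) ^ 2 * p ^ (#E - 2) *
          (((#E).choose 2 + 3 * ∑ D ∈ E.powersetCard 2, #{v | ∀ e ∈ D, v ∈ e} : ℕ) : ℝ) := by
  have hterm : ∀ D ∈ E.powersetCard 2,
      p ^ (#E - #D) * (1 - p) ^ #D * ‖ip (gs n ∅) (gs n D)‖ ^ 2
        = 1 / 16 * (1 - p) ^ 2 * p ^ (#E - 2) * ((1 + 3 * #{v | ∀ e ∈ D, v ∈ e} : ℕ) : ℝ) := by
    intro D hD
    obtain ⟨hDE, hD2⟩ := mem_powersetCard.1 hD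
    obtain ⟨e, f, hef, rfl⟩ := card_eq_two.1 hD2
    have hcommon : ({v | ∀ g ∈ ({e, f} : Finset _), v ∈ g} : Finset (Fin n))
        = e.toFinset ∩ f.toFinset := by
      ext; simp
    rw [hD2, norm_ip_gs_empty_pair_sq (hE e (hDE (by simp))) (hE f (hDE (by simp))) hef, hcommon]
    push_cast
    ring
  rw [sum_congr rfl hterm, ← mul_sum, ← Nat.cast_sum, sum_add_distrib, sum_const, card_powersetCard,
    ← mul_sum, smul_eq_mul, mul_one]

end GraphState

/-- the 2-level approximated randomization overlap is a lower bound on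
the full randomization overlap L(ρ^p_G) = Tr[|G⟩⟨G| ρ^p_G], for p ∈ [1/2,1]. -/
theorem two_level_approx_lower_bound (n : ℕ) (G : SimpleGraph (Fin n))
    [DecidableRel G.Adj] (p : ℝ) (hp0 : 1 / 2 ≤ p) (hp1 : p ≤ 1) :
    ∑ F ∈ G.edgeFinset.powerset,
        p ^ F.card * (1 - p) ^ (G.edgeFinset.card - F.card) *
          ‖ip (gs n G.edgeFinset) (gs n F)‖ ^ 2
      ≥ p ^ G.edgeFinset.card
        + 1 / 4 * (1 - p) * p ^ (G.edgeFinset.card - 1) * (G.edgeFinset.card : ℝ)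
        + 1 / 16 * (1 - p) ^ 2 * p ^ (G.edgeFinset.card - 2) *
            (((G.edgeFinset.card.choose 2 : ℕ) : ℝ)
              + 3 * ∑ v : Fin n, (((G.degree v).choose 2 : ℕ) : ℝ)) := by
  have hp : 0 ≤ p := by linarith
  have hE : ∀ e ∈ G.edgeFinset, ¬ e.IsDiag := fun e he =>
    G.not_isDiag_of_mem_edgeSet (SimpleGraph.mem_edgeFinset.1 he)
  rw [sum_powerset_norm_ip_sq_eq, ge_iff_le]
  calc _ = ∑ k ∈ range 3, ∑ D ∈ G.edgeFinset.powersetCard k,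
        p ^ (#G.edgeFinset - #D) * (1 - p) ^ #D * ‖ip (gs n ∅) (gs n D)‖ ^ 2 := by
        rw [sum_range_succ, sum_range_succ, sum_range_one, sum_powersetCard_zero_norm_ip_sq,
          sum_powersetCard_one_norm_ip_sq p hE,
          sum_powersetCard_two_norm_ip_sq p hE,
          G.sum_powersetCard_two_card_common_eq_sum_choose_degree]
        push_cast; ring
    _ ≤ _ := sum_range_sum_powersetCard_le_sum_powerset _ _ fun D _ =>
        mul_nonneg (mul_nonneg (pow_nonneg hp _) (pow_nonneg (sub_nonneg.2 hp1) _)) (sq_nonneg _)
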